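/- arXiv:2001.10387 — 4 statements merged into one kernel-verified Lean document; each statement's English description precedes it below -/
import Mathlib

section
/- Let X, Y be discrete random variables and V such that V - X - Y is a Markov chain and V is independent of X^α for subsets α in a collection 𝛂 = {α_1,...,α_L}. Then I(X;Y) - I(V;Y) ≥ max_{j} I(X^{α_j}; Y). -/
/-!
For one `α`, put `T = X^α = f(X)` and let `p` be the law of `(V, X, Y)`. The Markov property
`p(v, x, y) p(x) = p(v, x) p(x, y)` and the independence `p(v, t) = p(v) p(t)` merge the three
log-ratios of `I(X;Y) - I(V;Y) - I(T;Y)` into one: the difference is the relative entropy of `p`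
with respect to `r(v, x, y) = p(v, y) p(t | y) p(x | v, t)`, where `t = f(x)`. Since `r` has total
mass at most one, Gibbs' inequality makes it nonnegative.
-/

open Finset
open scoped BigOperators Classical

/-- Shannon entropy (in bits) of a finite distribution. -/
noncomputable def H {A : Type*} [Fintype A] (p : A → ℝ) : ℝ :=
  ∑ a, (if p a = 0 then 0 else -(p a * Real.logb 2 (p a)))

/-- Shannon mutual information (in bits) of a finite joint distribution. -/
noncomputable def MI {A B : Type*} [Fintype A] [Fintype B] (p : A → B → ℝ) : ℝ :=
  ∑ a, ∑ b,
    (if p a b = 0 then 0 else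
      p a b * Real.logb 2 (p a b / ((∑ b', p a b') * (∑ a', p a' b))))

/-- Conditional mutual information `I(A; B | C)` of a finite joint distribution. -/
noncomputable def CMI {A B C : Type*} [Fintype A] [Fintype B] [Fintype C]
    (p : A → B → C → ℝ) : ℝ :=
  ∑ a, ∑ b, ∑ c,
    (if p a b c = 0 then 0 else
      p a b c * Real.logb 2
        ((p a b c * (∑ a', ∑ b', p a' b' c)) /
          ((∑ b', p a b' c) * (∑ a', p a' b c))))

def IsJoint {A B : Type*} [Fintype A] [Fintype B] (p : A → B → ℝ) : Prop :=
  (∀ a b, 0 ≤ p a b) ∧ ∑ a, ∑ b, p a b = 1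

def IsDist {A : Type*} [Fintype A] (p : A → ℝ) : Prop :=
  (∀ a, 0 ≤ p a) ∧ ∑ a, p a = 1

def IsChannel {A B : Type*} [Fintype A] [Fintype B] (c : A → B → ℝ) : Prop :=
  (∀ a b, 0 ≤ c a b) ∧ ∀ a, ∑ b, c a b = 1

/-- Given a joint distribution `q` of `(V, X)`, the pair `(V, f(X))` is independent. -/
def IndepWithFun {V X T : Type*} [Fintype V] [Fintype X] (q : V → X → ℝ) (f : X → T) : Prop :=
  ∀ v t, (∑ x, if f x = t then q v x else 0) =
    (∑ x, q v x) * (∑ v', ∑ x, if f x = t then q v' x else 0)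

/-- Markov chain `A - B - C`: conditional independence of `A` and `C` given `B`. -/
def MarkovChain {A B C : Type*} [Fintype A] [Fintype B] [Fintype C]
    (q : A → B → C → ℝ) : Prop :=
  ∀ a b c, q a b c * (∑ a', ∑ c', q a' b c') =
    (∑ c', q a b c') * (∑ a', q a' b c)

/-- Restriction `X^α` of a tuple to the coordinates in `α`. -/
def restr {n : ℕ} {𝓧 : Fin n → Type*} (α : Finset (Fin n)) (x : ∀ i, 𝓧 i) :
    ∀ i : α, 𝓧 i.1 := fun i => x i.1

/-- The set of values `I(V;Y)` achievable through `𝛂`-synergistic channels `p_{V|X}`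
(so that `V - X - Y` is a Markov chain and `V ⫫ X^α` for every `α ∈ A`). -/
def synSet {n : ℕ} {𝓧 : Fin n → Type*} [∀ i, Fintype (𝓧 i)] {Y : Type*} [Fintype Y]
    (p : (∀ i, 𝓧 i) → Y → ℝ) (A : Finset (Finset (Fin n))) : Set ℝ :=
  { r | ∃ (k : ℕ) (c : (∀ i, 𝓧 i) → Fin k → ℝ), IsChannel c ∧
      (∀ α ∈ A, IndepWithFun (fun v x => c x v * (∑ y, p x y)) (restr (𝓧 := 𝓧) α)) ∧
      r = MI (fun (v : Fin k) (y : Y) => ∑ x, c x v * p x y) }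

/-- Synergistic disclosure `S^𝛂(X → Y)`. -/
noncomputable def Syn {n : ℕ} {𝓧 : Fin n → Type*} [∀ i, Fintype (𝓧 i)] {Y : Type*} [Fintype Y]
    (p : (∀ i, 𝓧 i) → Y → ℝ) (A : Finset (Finset (Fin n))) : ℝ :=
  sSup (synSet p A)

/-- The joint distribution of the pair `(X, X)`, used for self-synergy `S^𝛂(X → X)`. -/
noncomputable def selfJoint {X : Type*} [Fintype X] (pX : X → ℝ) : X → X → ℝ :=
  fun x x' => if x' = x then pX x else 0

open Real

theorem sub_le_mul_log_div {p u : ℝ} (hp : 0 ≤ p) (hu : 0 ≤ u) (hpu : p ≠ 0 → u ≠ 0) :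
    p - u ≤ p * log (p / u) := by
  rcases hp.eq_or_lt with rfl | hp
  · simpa using hu
  have hu : 0 < u := hu.lt_of_ne' (hpu hp.ne')
  have h := one_sub_inv_le_log_of_pos (div_pos hp hu)
  rw [inv_div] at h
  calc p - u = p * (1 - u / p) := by field_simp
    _ ≤ p * log (p / u) := mul_le_mul_of_nonneg_left h hp.le

theorem sum_mul_logb_div_nonneg {ι : Type*} [Fintype ι] {b : ℝ} (hb : 1 < b) (p u : ι → ℝ)
    (hp : ∀ i, 0 ≤ p i) (hu : ∀ i, 0 ≤ u i) (hpu : ∀ i, p i ≠ 0 → u i ≠ 0)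
    (hsum : ∑ i, u i ≤ ∑ i, p i) :
    0 ≤ ∑ i, p i * logb b (p i / u i) := by
  simp only [logb, mul_div_assoc', ← sum_div]
  refine div_nonneg ?_ (log_nonneg hb.le)
  calc (0 : ℝ) ≤ ∑ i, (p i - u i) := by rw [sum_sub_distrib]; linarith
    _ ≤ ∑ i, p i * log (p i / u i) :=
      sum_le_sum fun i _ => sub_le_mul_log_div (hp i) (hu i) (hpu i)

theorem le_sum_sum {A B : Type*} [Fintype A] [Fintype B] {h : A → B → ℝ}
    (hh : ∀ a b, 0 ≤ h a b) (a : A) (b : B) : h a b ≤ ∑ a', ∑ b', h a' b' :=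
  (single_le_sum (fun b' _ => hh a b') (mem_univ b)).trans
    (single_le_sum (fun a' _ => sum_nonneg fun b' _ => hh a' b') (mem_univ a))

theorem sum_pushforward_mul {ι T R : Type*} [Fintype ι] [Fintype T] [DecidableEq T]
    [NonUnitalNonAssocSemiring R] (g : ι → T) (w : ι → R) (P h : T → R)
    (hP : ∀ t, P t = ∑ i, if g i = t then w i else 0) :
    ∑ t, P t * h t = ∑ i, w i * h (g i) := by
  simp only [hP, sum_mul, ite_mul, zero_mul]
  rw [sum_comm]
  simp

theorem sum_pushforward₂_mul {V X T R : Type*} [Fintype V] [Fintype X] [Fintype T]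
    [DecidableEq T] [NonUnitalNonAssocSemiring R] (g : V → X → T) (w : V → X → R) (P h : T → R)
    (hP : ∀ t, P t = ∑ v, ∑ x, if g v x = t then w v x else 0) :
    ∑ t, P t * h t = ∑ v, ∑ x, w v x * h (g v x) := by
  simp only [hP, sum_mul, ite_mul, zero_mul]
  rw [sum_comm]
  refine sum_congr rfl fun v _ => ?_
  rw [sum_comm]
  simp

theorem MI_eq_sum_mul_logb {A B : Type*} [Fintype A] [Fintype B] (p : A → B → ℝ) :
    MI p = ∑ a, ∑ b, p a b * logb 2 (p a b / ((∑ b', p a b') * ∑ a', p a' b)) := by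
  unfold MI
  refine sum_congr rfl fun a _ => sum_congr rfl fun b _ => ?_
  split_ifs with h <;> simp [h]

theorem MI_eq_sum_mul_logb_of_pushforward {V X Y T : Type*} [Fintype V] [Fintype X]
    [Fintype Y] [Fintype T] [DecidableEq T] (q : V → X → Y → ℝ) (g : V → X → T)
    (P : T → Y → ℝ) (hP : ∀ t y, P t y = ∑ v, ∑ x, if g v x = t then q v x y else 0) :
    MI P = ∑ v, ∑ x, ∑ y,
      q v x y * logb 2 (P (g v x) y / ((∑ y', P (g v x) y') * ∑ v', ∑ x', q v' x' y)) := by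
  have hcol (y : Y) : ∑ t, P t y = ∑ v, ∑ x, q v x y := by
    simpa using sum_pushforward₂_mul g (fun v x => q v x y) (P · y) 1 (hP · y)
  rw [MI_eq_sum_mul_logb, sum_comm]
  simp only [hcol]
  rw [sum_congr rfl fun y _ => sum_pushforward₂_mul g (fun v x => q v x y) (P · y) _ (hP · y),
    sum_comm]
  exact sum_congr rfl fun v _ => sum_comm

noncomputable section

variable {V X Y T : Type*}

def margVX [Fintype Y] (q : V → X → Y → ℝ) (v : V) (x : X) : ℝ := ∑ y, q v x y
def margVY [Fintype X] (q : V → X → Y → ℝ) (v : V) (y : Y) : ℝ := ∑ x, q v x y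
def margXY [Fintype V] (q : V → X → Y → ℝ) (x : X) (y : Y) : ℝ := ∑ v, q v x y
def margV [Fintype X] [Fintype Y] (q : V → X → Y → ℝ) (v : V) : ℝ := ∑ y, ∑ x, q v x y
def margX [Fintype V] [Fintype Y] (q : V → X → Y → ℝ) (x : X) : ℝ := ∑ y, ∑ v, q v x y
def margY [Fintype V] [Fintype X] (q : V → X → Y → ℝ) (y : Y) : ℝ := ∑ v, ∑ x, q v x y

def margTY [Fintype V] [Fintype X] [DecidableEq T] (f : X → T) (q : V → X → Y → ℝ) (t : T)
    (y : Y) : ℝ :=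
  ∑ v, ∑ x, if f x = t then q v x y else 0

def margT [Fintype V] [Fintype X] [Fintype Y] [DecidableEq T] (f : X → T)
    (q : V → X → Y → ℝ) (t : T) : ℝ :=
  ∑ y, margTY f q t y

def margVT [Fintype X] [Fintype Y] [DecidableEq T] (f : X → T) (q : V → X → Y → ℝ) (v : V)
    (t : T) : ℝ :=
  ∑ x, if f x = t then margVX q v x else 0

/-- `r(v, x, y) = p(v, y) p(t | y) p(x | v, t)` with `t = f x`; since `/ 0 = 0`, it drops the mass
where `p(v, t) p(y) = 0`, so it is only a sub-probability. -/
def refWeight [Fintype V] [Fintype X] [Fintype Y] [DecidableEq T] (f : X → T)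
    (q : V → X → Y → ℝ) (v : V) (x : X) (y : Y) : ℝ :=
  margVY q v y * margVX q v x * margTY f q (f x) y / (margVT f q v (f x) * margY q y)

theorem sum_margTY [Fintype V] [Fintype X] [Fintype T] [DecidableEq T] (f : X → T)
    (q : V → X → Y → ℝ) (y : Y) : ∑ t, margTY f q t y = margY q y := by
  simpa [margY] using sum_pushforward₂_mul (fun _ x => f x) (fun v x => q v x y)
    (margTY f q · y) 1 fun _ => rfl

theorem margTY_nonneg [Fintype V] [Fintype X] [DecidableEq T] (f : X → T)
    {q : V → X → Y → ℝ} (hpos : ∀ v x y, 0 ≤ q v x y) (t : T) (y : Y) : 0 ≤ margTY f q t y :=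
  sum_nonneg fun v _ => sum_nonneg fun x _ => ite_nonneg (hpos v x y) le_rfl

theorem marginals_pos [Fintype V] [Fintype X] [Fintype Y] [DecidableEq T] (f : X → T)
    {q : V → X → Y → ℝ} (hpos : ∀ v x y, 0 ≤ q v x y) {v : V} {x : X} {y : Y}
    (hq : 0 < q v x y) :
    0 < margXY q x y ∧ 0 < margX q x ∧ 0 < margY q y ∧ 0 < margVX q v x ∧
      0 < margVY q v y ∧ 0 < margV q v ∧ 0 < margTY f q (f x) y ∧ 0 < margT f q (f x) ∧
        0 < margVT f q v (f x) := by
  have hVX : q v x y ≤ margVX q v x := single_le_sum (fun y _ => hpos v x y) (mem_univ y)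
  have hTY : q v x y ≤ margTY f q (f x) y := by
    simpa [margTY] using le_sum_sum (h := fun v x' => if f x' = f x then q v x' y else 0)
      (fun v x' => ite_nonneg (hpos v x' y) le_rfl) v x
  have hT : margTY f q (f x) y ≤ margT f q (f x) :=
    single_le_sum (fun y _ => margTY_nonneg f hpos _ y) (mem_univ y)
  have hVT : margVX q v x ≤ margVT f q v (f x) := by
    simpa [margVT] using single_le_sum (f := fun x' => if f x' = f x then margVX q v x' else 0)
      (fun x' _ => ite_nonneg (sum_nonneg fun y _ => hpos v x' y) le_rfl) (mem_univ x)
  exact ⟨hq.trans_le (single_le_sum (fun v _ => hpos v x y) (mem_univ v)),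
    hq.trans_le (le_sum_sum (fun y v => hpos v x y) y v),
    hq.trans_le (le_sum_sum (fun v x => hpos v x y) v x), hq.trans_le hVX,
    hq.trans_le (single_le_sum (fun x _ => hpos v x y) (mem_univ x)),
    hq.trans_le (le_sum_sum (fun y x => hpos v x y) y x), hq.trans_le hTY,
    (hq.trans_le hTY).trans_le hT, (hq.trans_le hVX).trans_le hVT⟩

theorem refWeight_nonneg [Fintype V] [Fintype X] [Fintype Y] [DecidableEq T] (f : X → T)
    {q : V → X → Y → ℝ} (hpos : ∀ v x y, 0 ≤ q v x y) (v : V) (x : X) (y : Y) :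
    0 ≤ refWeight f q v x y :=
  div_nonneg
    (mul_nonneg (mul_nonneg (sum_nonneg fun x _ => hpos v x y) (sum_nonneg fun y _ => hpos v x y))
      (margTY_nonneg f hpos _ y))
    (mul_nonneg (sum_nonneg fun x' _ => ite_nonneg (sum_nonneg fun y _ => hpos v x' y) le_rfl)
      (sum_nonneg fun v _ => sum_nonneg fun x _ => hpos v x y))

theorem refWeight_pos [Fintype V] [Fintype X] [Fintype Y] [DecidableEq T] (f : X → T)
    {q : V → X → Y → ℝ} (hpos : ∀ v x y, 0 ≤ q v x y) {v : V} {x : X} {y : Y}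
    (hq : 0 < q v x y) : 0 < refWeight f q v x y := by
  obtain ⟨-, -, hY, hVX, hVY, -, hTY, -, hVT⟩ := marginals_pos f hpos hq
  unfold refWeight
  positivity

theorem sum_refWeight_le_one [Fintype V] [Fintype X] [Fintype Y] [Fintype T] [DecidableEq T]
    (f : X → T) {q : V → X → Y → ℝ} (hpos : ∀ v x y, 0 ≤ q v x y)
    (hsum : ∑ v, ∑ x, ∑ y, q v x y = 1) :
    ∑ v, ∑ x, ∑ y, refWeight f q v x y ≤ 1 := by
  have hfiber (v : V) (y : Y) : ∑ x, refWeight f q v x y ≤ margVY q v y := by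
    let k t := margTY f q t y / margY q y
    have hk (t : T) : 0 ≤ k t :=
      div_nonneg (margTY_nonneg f hpos t y) (sum_nonneg fun v _ => sum_nonneg fun x _ => hpos v x y)
    calc ∑ x, refWeight f q v x y
        = margVY q v y * ∑ t, margVT f q v t * (k t / margVT f q v t) := by
          rw [sum_pushforward_mul f (margVX q v) (margVT f q v) _ fun _ => rfl, mul_sum]
          refine sum_congr rfl fun x _ => ?_
          simp only [refWeight, k]
          ring
      _ ≤ margVY q v y * ∑ t, k t := by
          refine mul_le_mul_of_nonneg_left (sum_le_sum fun t _ => ?_)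
            (sum_nonneg fun x _ => hpos v x y)
          rcases eq_or_ne (margVT f q v t) 0 with h | h
          · simpa [h] using hk t
          · rw [mul_div_cancel₀ _ h]
      _ ≤ margVY q v y := by
          refine mul_le_of_le_one_right (sum_nonneg fun x _ => hpos v x y) ?_
          simpa only [k, ← sum_div, sum_margTY] using div_self_le_one (margY q y)
  calc ∑ v, ∑ x, ∑ y, refWeight f q v x y
      = ∑ v, ∑ y, ∑ x, refWeight f q v x y := sum_congr rfl fun v _ => sum_comm
    _ ≤ ∑ v, ∑ y, margVY q v y := sum_le_sum fun v _ => sum_le_sum fun y _ => hfiber v y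
    _ = 1 := by simpa only [margVY, sum_comm (γ := Y)] using hsum

theorem margVT_eq_mul [Fintype V] [Fintype X] [Fintype Y] [DecidableEq T] (f : X → T)
    {q : V → X → Y → ℝ} (hind : IndepWithFun (fun v x => ∑ y, q v x y) f) (v : V) (t : T) :
    margVT f q v t = margV q v * margT f q t := by
  have hV : margV q v = ∑ x, ∑ y, q v x y := sum_comm
  have hT : margT f q t = ∑ v, ∑ x, if f x = t then ∑ y, q v x y else 0 := by
    simp only [margT, margTY, ite_sum_zero]
    rw [sum_comm]
    exact sum_congr rfl fun v _ => sum_comm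
  simp only [hV, hT, margVT, margVX]
  -- `IndepWithFun` decides `f x = t` classically rather than by `DecidableEq T`
  convert hind v t

theorem mul_logb_sub_sub_eq_mul_logb_div_refWeight [Fintype V] [Fintype X] [Fintype Y]
    [DecidableEq T] (f : X → T) {q : V → X → Y → ℝ} (hpos : ∀ v x y, 0 ≤ q v x y)
    (hmc : MarkovChain q) (hind : IndepWithFun (fun v x => ∑ y, q v x y) f)
    (v : V) (x : X) (y : Y) :
    q v x y * logb 2 (margXY q x y / (margX q x * margY q y)) -
        q v x y * logb 2 (margVY q v y / (margV q v * margY q y)) -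
          q v x y * logb 2 (margTY f q (f x) y / (margT f q (f x) * margY q y)) =
      q v x y * logb 2 (q v x y / refWeight f q v x y) := by
  rcases (hpos v x y).eq_or_lt with hq | hq
  · simp [← hq]
  obtain ⟨hXY, hX, hY, hVX, hVY, hV, hTY, hT, -⟩ := marginals_pos f hpos hq
  have hmarkov : q v x y * margX q x = margVX q v x * margXY q x y := by
    rw [margX, sum_comm]
    exact hmc v x y
  rw [← mul_sub, ← mul_sub, ← logb_div (by positivity) (by positivity),
    ← logb_div (by positivity) (by positivity), refWeight, margVT_eq_mul f hind]
  congr 2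
  field_simp
  linear_combination -hmarkov

theorem MI_comp_le_MI_sub_MI [Fintype V] [Fintype X] [Fintype Y] [Fintype T] [DecidableEq T]
    (f : X → T) {q : V → X → Y → ℝ} (hpos : ∀ v x y, 0 ≤ q v x y)
    (hsum : ∑ v, ∑ x, ∑ y, q v x y = 1) (hmc : MarkovChain q)
    (hind : IndepWithFun (fun v x => ∑ y, q v x y) f) :
    MI (fun t y => ∑ v, ∑ x, if f x = t then q v x y else 0) ≤
      MI (fun x y => ∑ v, q v x y) - MI (fun v y => ∑ x, q v x y) := by
  have hX : MI (fun x y => ∑ v, q v x y) =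
      ∑ v, ∑ x, ∑ y, q v x y * logb 2 (margXY q x y / (margX q x * margY q y)) :=
    MI_eq_sum_mul_logb_of_pushforward q (fun _ x => x) _ fun t y => by simp
  have hV : MI (fun v y => ∑ x, q v x y) =
      ∑ v, ∑ x, ∑ y, q v x y * logb 2 (margVY q v y / (margV q v * margY q y)) :=
    MI_eq_sum_mul_logb_of_pushforward q (fun v _ => v) _ fun t y => by simp
  have hT : MI (margTY f q) = ∑ v, ∑ x, ∑ y,
      q v x y * logb 2 (margTY f q (f x) y / (margT f q (f x) * margY q y)) :=
    MI_eq_sum_mul_logb_of_pushforward q (fun _ x => f x) _ fun t y => rfl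
  have hgibbs := sum_mul_logb_div_nonneg one_lt_two (fun i : V × X × Y => q i.1 i.2.1 i.2.2)
    (fun i => refWeight f q i.1 i.2.1 i.2.2) (fun i => hpos _ _ _)
    (fun i => refWeight_nonneg f hpos _ _ _)
    (fun i hi => (refWeight_pos f hpos ((hpos _ _ _).lt_of_ne' hi)).ne')
    (by simpa only [Fintype.sum_prod_type, hsum] using sum_refWeight_le_one f hpos hsum)
  rw [← sub_nonneg]
  change 0 ≤ MI (fun x y => ∑ v, q v x y) - MI (fun v y => ∑ x, q v x y) - MI (margTY f q)
  simpa only [hX, hV, hT, ← sum_sub_distrib, Fintype.sum_prod_type,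
    mul_logb_sub_sub_eq_mul_logb_div_refWeight f hpos hmc hind] using hgibbs

end

/-- if `V - X - Y` is a Markov chain and `V ⫫ X^α` for all `α` in a
collection `A`, then `I(X;Y) - I(V;Y) ≥ max_{α ∈ A} I(X^α; Y)`. -/
theorem non_synergistic_lower_bound
    {n : ℕ} {𝓧 : Fin n → Type*} [∀ i, Fintype (𝓧 i)]
    {V Y : Type*} [Fintype V] [Fintype Y]
    (q : V → (∀ i, 𝓧 i) → Y → ℝ)
    (A : Finset (Finset (Fin n))) (hA : A.Nonempty)
    (hpos : ∀ v x y, 0 ≤ q v x y)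
    (hsum : ∑ v, ∑ x, ∑ y, q v x y = 1)
    (hmc : MarkovChain q)
    (hind : ∀ α ∈ A, IndepWithFun (fun v x => ∑ y, q v x y) (restr (𝓧 := 𝓧) α)) :
    MI (fun (x : ∀ i, 𝓧 i) (y : Y) => ∑ v, q v x y) - MI (fun v y => ∑ x, q v x y) ≥
      A.sup' hA (fun α => MI (fun (a : ∀ i : ↥α, 𝓧 i.1) (y : Y) =>
        ∑ v, ∑ x, if restr α x = a then q v x y else 0)) :=
  sup'_le hA _ fun α hα => MI_comp_le_MI_sub_MI (restr α) hpos hsum hmc (hind α hα)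
end

section
/- Target data processing inequality for synergy: if X - Y - Z is a Markov chain, then S^𝛂(X → Y) ≥ S^𝛂(X → Z). -/
open Finset
open scoped BigOperators Classical

/-!
Any channel `p_{V|X}` that is admissible for `S^𝛂(X → Z)` is admissible for `S^𝛂(X → Y)`,
because admissibility only involves the law of `X`, which both joints share. Composing it
with the chain `X - Y - Z` gives a chain `V - Y - Z`, so `I(V;Z) ≤ I(V;Y)`: the difference
`I(V;Y) - I(V;Z) = I(V;Y|Z)` is the relative entropy of `p_{VYZ}` from `p_{VZ} p_{Y|Z}`,
nonnegative by Gibbs' inequality. Each value in the supremum defining `S^𝛂(X → Z)` is thus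
dominated by one in `S^𝛂(X → Y)`, and the latter set is bounded by `|Y| / log 2`.
-/

section Gibbs

variable {ι : Type*} {β : ℝ}

lemma sub_div_log_le_mul_logb_div (hβ : 1 < β) {a b : ℝ} (ha : 0 ≤ a) (hb : 0 ≤ b)
    (hab : a ≠ 0 → 0 < b) : (a - b) / Real.log β ≤ a * Real.logb β (a / b) := by
  have hlogβ : 0 < Real.log β := Real.log_pos hβ
  rcases ha.eq_or_lt with rfl | ha
  · simpa using div_nonpos_of_nonpos_of_nonneg (neg_nonpos.2 hb) hlogβ.le
  have hb := hab ha.ne'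
  rw [Real.logb, ← mul_div_assoc, div_le_div_iff_of_pos_right hlogβ]
  have h := Real.one_sub_inv_le_log_of_pos (div_pos ha hb)
  rw [inv_div] at h
  calc a - b = a * (1 - b / a) := by field_simp
    _ ≤ a * Real.log (a / b) := mul_le_mul_of_nonneg_left h ha.le

lemma sum_mul_logb_div_nonneg_s8 (hβ : 1 < β) {s : Finset ι} {f g : ι → ℝ}
    (hf : ∀ i ∈ s, 0 ≤ f i) (hg : ∀ i ∈ s, 0 ≤ g i) (hfg : ∀ i ∈ s, f i ≠ 0 → 0 < g i)
    (hmass : ∑ i ∈ s, g i ≤ ∑ i ∈ s, f i) :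
    0 ≤ ∑ i ∈ s, f i * Real.logb β (f i / g i) :=
  calc 0 ≤ (∑ i ∈ s, f i - ∑ i ∈ s, g i) / Real.log β :=
        div_nonneg (sub_nonneg.2 hmass) (Real.log_pos hβ).le
    _ = ∑ i ∈ s, (f i - g i) / Real.log β := by rw [← sum_sub_distrib, sum_div]
    _ ≤ _ := sum_le_sum fun i hi =>
        sub_div_log_le_mul_logb_div hβ (hf i hi) (hg i hi) (hfg i hi)

end Gibbs

section CondIndepJoint

variable {V Y Z : Type*} [Fintype V] [Fintype Y]

/-- `p_{VZ} p_{Y|Z}`: the law with the `(V, Z)` and `(Y, Z)` marginals of `Q` under which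
`V - Z - Y` is a Markov chain. -/
noncomputable def condIndepJoint (Q : V → Y → Z → ℝ) : V → Y → Z → ℝ := fun v y z =>
  (∑ v', Q v' y z) * (∑ y', Q v y' z) / ∑ v', ∑ y', Q v' y' z

variable {Q : V → Y → Z → ℝ}

lemma condIndepJoint_nonneg (hQ : ∀ v y z, 0 ≤ Q v y z) (v : V) (y : Y) (z : Z) :
    0 ≤ condIndepJoint Q v y z :=
  div_nonneg (mul_nonneg (sum_nonneg fun _ _ => hQ _ _ _) (sum_nonneg fun _ _ => hQ _ _ _))
    (sum_nonneg fun _ _ => sum_nonneg fun _ _ => hQ _ _ _)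

lemma condIndepJoint_pos (hQ : ∀ v y z, 0 ≤ Q v y z) {v : V} {y : Y} {z : Z}
    (h : 0 < Q v y z) : 0 < condIndepJoint Q v y z :=
  div_pos (mul_pos (sum_pos' (fun _ _ => hQ _ _ _) ⟨v, mem_univ _, h⟩)
    (sum_pos' (fun _ _ => hQ _ _ _) ⟨y, mem_univ _, h⟩))
    (sum_pos' (fun _ _ => sum_nonneg fun _ _ => hQ _ _ _)
      ⟨v, mem_univ _, sum_pos' (fun _ _ => hQ _ _ _) ⟨y, mem_univ _, h⟩⟩)

end CondIndepJoint

section MutualInformation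

variable {V X Y Z : Type*} [Fintype V] [Fintype X] [Fintype Y] [Fintype Z]

lemma MI_eq_sum (p : X → Y → ℝ) :
    MI p = ∑ x, ∑ y, p x y * Real.logb 2 (p x y / ((∑ y', p x y') * ∑ x', p x' y)) := by
  refine sum_congr rfl fun x _ => sum_congr rfl fun y _ => ?_
  split_ifs with h <;> simp [h]

lemma MI_le_card_div_log_two {p : X → Y → ℝ} (hp : ∀ x y, 0 ≤ p x y) :
    MI p ≤ Fintype.card Y / Real.log 2 := by
  have hterm : ∀ x y, p x y * Real.logb 2 (p x y / ((∑ y', p x y') * ∑ x', p x' y)) ≤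
      p x y / (∑ x', p x' y) / Real.log 2 := by
    intro x y
    rcases (hp x y).eq_or_lt with h | h
    · simp [← h]
    have hX : p x y ≤ ∑ y', p x y' := single_le_sum (fun y' _ => hp x y') (mem_univ y)
    have hY : p x y ≤ ∑ x', p x' y := single_le_sum (fun x' _ => hp x' y) (mem_univ x)
    have hXY := mul_pos (h.trans_le hX) (h.trans_le hY)
    have hlog := Real.log_le_sub_one_of_pos (div_pos h hXY)
    rw [Real.logb, ← mul_div_assoc]
    gcongr
    calc p x y * Real.log (p x y / ((∑ y', p x y') * ∑ x', p x' y))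
        ≤ p x y * (p x y / ((∑ y', p x y') * ∑ x', p x' y)) := by
          gcongr; linarith
      _ ≤ p x y / ∑ x', p x' y := by
          rw [mul_div_assoc', div_le_div_iff₀ hXY (h.trans_le hY)]
          nlinarith [mul_le_mul_of_nonneg_right hX (mul_nonneg h.le (h.trans_le hY).le)]
  calc MI p ≤ ∑ x, ∑ y, p x y / (∑ x', p x' y) / Real.log 2 := by
        rw [MI_eq_sum]; exact sum_le_sum fun x _ => sum_le_sum fun y _ => hterm x y
    _ = ∑ y, (∑ x, p x y) / (∑ x', p x' y) / Real.log 2 := by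
        rw [sum_comm]; simp only [← sum_div]
    _ ≤ ∑ _y : Y, 1 / Real.log 2 := by
        gcongr; exact div_self_le_one _
    _ = Fintype.card Y / Real.log 2 := by simp [div_eq_mul_inv]

lemma MI_marginal_eq_sum (Q : V → Y → Z → ℝ) :
    MI (fun v y => ∑ z, Q v y z) = ∑ v, ∑ y, ∑ z, Q v y z * Real.logb 2
      ((∑ z', Q v y z') / ((∑ y', ∑ z', Q v y' z') * ∑ v', ∑ z', Q v' y z')) := by
  rw [MI_eq_sum]
  exact sum_congr rfl fun v _ => sum_congr rfl fun y _ => sum_mul _ _ _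

lemma sum_condIndepJoint (Q : V → Y → Z → ℝ) :
    ∑ v, ∑ y, ∑ z, condIndepJoint Q v y z = ∑ v, ∑ y, ∑ z, Q v y z := by
  have hswap (F : V → Y → Z → ℝ) : ∑ v, ∑ y, ∑ z, F v y z = ∑ z, ∑ v, ∑ y, F v y z :=
    (sum_congr rfl fun v _ => sum_comm).trans sum_comm
  rw [hswap, hswap Q]
  refine sum_congr rfl fun z _ => ?_
  have hS : ∑ y, ∑ v', Q v' y z = ∑ v', ∑ y', Q v' y' z := sum_comm
  calc ∑ v, ∑ y, condIndepJoint Q v y z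
      = (∑ y, ∑ v', Q v' y z) * (∑ v, ∑ y', Q v y' z) / ∑ v', ∑ y', Q v' y' z := by
        simp only [condIndepJoint, sum_mul_sum, sum_div]
        exact sum_comm
    _ = ∑ v, ∑ y, Q v y z := by rw [hS, mul_self_div_self]

lemma MI_sub_MI_eq_of_markovChain {Q : V → Y → Z → ℝ} (hQ : ∀ v y z, 0 ≤ Q v y z)
    (hmc : MarkovChain Q) :
    MI (fun v y => ∑ z, Q v y z) - MI (fun v z => ∑ y, Q v y z) =
      ∑ v, ∑ y, ∑ z, Q v y z * Real.logb 2 (Q v y z / condIndepJoint Q v y z) := by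
  have hVZ : MI (fun v z => ∑ y, Q v y z) = ∑ v, ∑ y, ∑ z, Q v y z * Real.logb 2
      ((∑ y', Q v y' z) / ((∑ z', ∑ y', Q v y' z') * ∑ v', ∑ y', Q v' y' z)) := by
    rw [MI_marginal_eq_sum (fun v z y => Q v y z)]
    exact sum_congr rfl fun v _ => sum_comm
  simp only [MI_marginal_eq_sum, hVZ, ← sum_sub_distrib, ← mul_sub]
  refine sum_congr rfl fun v _ => sum_congr rfl fun y _ => sum_congr rfl fun z _ => ?_
  rcases (hQ v y z).eq_or_lt with h | h
  · simp [← h]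
  have hv : 0 < ∑ v', Q v' y z := sum_pos' (fun _ _ => hQ _ _ _) ⟨v, mem_univ _, h⟩
  have hy : 0 < ∑ y', Q v y' z := sum_pos' (fun _ _ => hQ _ _ _) ⟨y, mem_univ _, h⟩
  have hz : 0 < ∑ z', Q v y z' := sum_pos' (fun _ _ => hQ _ _ _) ⟨z, mem_univ _, h⟩
  have hyz : 0 < ∑ y', ∑ z', Q v y' z' :=
    sum_pos' (fun _ _ => sum_nonneg fun _ _ => hQ _ _ _) ⟨y, mem_univ _, hz⟩
  have hvz : 0 < ∑ v', ∑ z', Q v' y z' :=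
    sum_pos' (fun _ _ => sum_nonneg fun _ _ => hQ _ _ _) ⟨v, mem_univ _, hz⟩
  have hvy : 0 < ∑ v', ∑ y', Q v' y' z :=
    sum_pos' (fun _ _ => sum_nonneg fun _ _ => hQ _ _ _) ⟨v, mem_univ _, hy⟩
  have hcomm : ∑ z', ∑ y', Q v y' z' = ∑ y', ∑ z', Q v y' z' := sum_comm
  rw [hcomm, ← Real.logb_div (div_pos hz (mul_pos hyz hvz)).ne'
    (div_pos hy (mul_pos hyz hvy)).ne', condIndepJoint]
  field_simp
  congr 1
  rw [div_eq_div_iff (mul_pos hvz hy).ne' (mul_pos hy hv).ne']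
  linear_combination (-(∑ v', ∑ y', Q v' y' z) * ∑ y', Q v y' z) * hmc v y z

lemma MI_le_of_markovChain {Q : V → Y → Z → ℝ} (hQ : ∀ v y z, 0 ≤ Q v y z)
    (hmc : MarkovChain Q) :
    MI (fun v z => ∑ y, Q v y z) ≤ MI (fun v y => ∑ z, Q v y z) := by
  have hgibbs := sum_mul_logb_div_nonneg_s8 one_lt_two (s := (univ : Finset (V × Y × Z)))
    (f := fun p => Q p.1 p.2.1 p.2.2) (g := fun p => condIndepJoint Q p.1 p.2.1 p.2.2)
    (fun _ _ => hQ _ _ _) (fun _ _ => condIndepJoint_nonneg hQ _ _ _)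
    (fun _ _ h => condIndepJoint_pos hQ ((hQ _ _ _).lt_of_ne' h))
    (by simp only [Fintype.sum_prod_type, sum_condIndepJoint, le_refl])
  simp only [Fintype.sum_prod_type] at hgibbs
  linarith [MI_sub_MI_eq_of_markovChain hQ hmc]

end MutualInformation

section Channels

variable {V X Y Z : Type*} [Fintype V] [Fintype X] [Fintype Y] [Fintype Z]

lemma IsChannel.sum_sum_mul {c : X → V → ℝ} (hc : IsChannel c) (f : X → ℝ) :
    ∑ v, ∑ x, c x v * f x = ∑ x, f x := by
  rw [sum_comm]
  exact sum_congr rfl fun x _ => by rw [← sum_mul, hc.2 x, one_mul]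

lemma MarkovChain.channel_comp {P : X → Y → Z → ℝ} (hmc : MarkovChain P) {c : X → V → ℝ}
    (hc : IsChannel c) : MarkovChain (fun v y z => ∑ x, c x v * P x y z) := by
  intro v y z
  have hyz : ∑ v', ∑ x, c x v' * P x y z = ∑ x, P x y z := hc.sum_sum_mul _
  have hy : ∑ v', ∑ z', ∑ x, c x v' * P x y z' = ∑ x, ∑ z', P x y z' := by
    rw [sum_comm]
    simp only [hc.sum_sum_mul]
    exact sum_comm
  have hvy : ∑ z', ∑ x, c x v * P x y z' = ∑ x, c x v * ∑ z', P x y z' := by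
    rw [sum_comm]
    simp only [mul_sum]
  rw [hyz, hy, hvy, sum_mul, sum_mul]
  exact sum_congr rfl fun x _ => by linear_combination c x v * hmc x y z

lemma MI_channel_comp_le {P : X → Y → Z → ℝ} (hP : ∀ x y z, 0 ≤ P x y z)
    (hmc : MarkovChain P) {c : X → V → ℝ} (hc : IsChannel c) :
    MI (fun v z => ∑ x, c x v * ∑ y, P x y z) ≤ MI (fun v y => ∑ x, c x v * ∑ z, P x y z) := by
  have h := MI_le_of_markovChain
    (fun v y z => sum_nonneg fun x _ => mul_nonneg (hc.1 x v) (hP x y z)) (hmc.channel_comp hc)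
  convert h using 4 <;> simp only [mul_sum] <;> exact sum_comm

end Channels

section Synergy

variable {n : ℕ} {𝓧 : Fin n → Type*} [∀ i, Fintype (𝓧 i)] {Y : Type*} [Fintype Y]

lemma synSet_bddAbove {p : (∀ i, 𝓧 i) → Y → ℝ} (hp : ∀ x y, 0 ≤ p x y)
    (A : Finset (Finset (Fin n))) : BddAbove (synSet p A) := by
  refine ⟨Fintype.card Y / Real.log 2, ?_⟩
  rintro _ ⟨k, c, hc, -, rfl⟩
  exact MI_le_card_div_log_two fun v y => sum_nonneg fun x _ => mul_nonneg (hc.1 x v) (hp x y)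

lemma synSet_nonempty {p : (∀ i, 𝓧 i) → Y → ℝ} (hp : ∑ x, ∑ y, p x y = 1)
    (A : Finset (Finset (Fin n))) : (synSet p A).Nonempty :=
  ⟨_, 1, fun _ _ => 1, ⟨fun _ _ => zero_le_one, fun _ => by simp⟩,
    fun α _ v t => by simp [hp], rfl⟩

end Synergy

/-- target data processing inequality, if `X - Y - Z` is a Markov
chain then `S^𝛂(X → Y) ≥ S^𝛂(X → Z)`. -/
theorem syn_target_dpi
    {n : ℕ} {𝓧 : Fin n → Type*} [∀ i, Fintype (𝓧 i)]
    {Yt Zt : Type*} [Fintype Yt] [Fintype Zt]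
    (P : (∀ i, 𝓧 i) → Yt → Zt → ℝ)
    (hpos : ∀ x y z, 0 ≤ P x y z)
    (hsum : ∑ x, ∑ y, ∑ z, P x y z = 1)
    (hmc : MarkovChain P)
    (A : Finset (Finset (Fin n))) :
    Syn (fun x z => ∑ y, P x y z) A ≤ Syn (fun x y => ∑ z, P x y z) A := by
  have hmarg (x : ∀ i, 𝓧 i) : ∑ z, ∑ y, P x y z = ∑ y, ∑ z, P x y z := sum_comm
  refine csSup_le (synSet_nonempty (by simpa only [hmarg] using hsum) A) ?_
  rintro _ ⟨k, c, hc, hindep, rfl⟩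
  have hbdd : BddAbove (synSet (fun x y => ∑ z, P x y z) A) :=
    synSet_bddAbove (fun x y => sum_nonneg fun z _ => hpos x y z) A
  refine (MI_channel_comp_le hpos hmc hc).trans (le_csSup hbdd ⟨k, c, hc, fun α hα => ?_, rfl⟩)
  simpa only [hmarg] using hindep α hα
end

section
/- Asymptotic dominance of synergy: let X = (X_1,...,X_n) with each |𝒳_k| ≤ K, and suppose lim_{n→∞} H(X)/n exists and is positive. Then for fixed m, lim_{n→∞} B^m(X)/H(X) = 1, where B^m(X) is the m-th backbone self-synergy. -/
/-!
The constraints `V ⫫ X^α` (`|α| = m`) and the normalisation are linear in the joint law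
`lam v * Q v x` of `(V, X)`: every component `Q v` must have mass one and the same `α`-marginals
as `p_X`. In the polytope of such laws, a vector with more support points than the constraint
matrix has rows can be pushed both ways along a kernel direction until a coordinate dies, so `p_X`
is a mixture of components with at most `N ≤ 2 ((n+1)(K+1))^m` support points each. Taking the
mixing index as `V` gives a synergistic channel with
`I(V;X) = H(X) - ∑ v, lam v * H(Q v) ≥ H(X) - log N`, while `I(V;X) ≤ H(X)` always.
As `log N = O(log n)` and `H(X)` grows linearly, `B^m(X) / H(X) → 1`.
-/
open Finset
open scoped BigOperators Classical

open Function Real Matrix Filter Topology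

theorem H_eq_sum {A : Type*} [Fintype A] (p : A → ℝ) :
    H p = ∑ a, -(p a * logb 2 (p a)) :=
  Finset.sum_congr rfl fun a _ => by split_ifs with h <;> simp [h]

theorem H_le_logb_ncard_support {A : Type*} [Fintype A] {p : A → ℝ} (hp : IsDist p) :
    H p ≤ logb 2 (support p).ncard := by
  set T := (support p).toFinset
  have hpos : ∀ a ∈ T, 0 < p a := fun a ha =>
    (hp.1 a).lt_of_ne' (Set.mem_toFinset.1 ha)
  have hT : ∑ a ∈ T, p a = 1 := by
    rw [← hp.2]
    exact Finset.sum_subset (Finset.subset_univ _) fun a _ ha => by simpa [T] using ha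
  -- Jensen for the concave `log`, at the points `(p a)⁻¹` weighted by `p a`
  have hJensen : ∑ a ∈ T, p a * log (p a)⁻¹ ≤ log (∑ a ∈ T, p a * (p a)⁻¹) :=
    strictConcaveOn_log_Ioi.concaveOn.le_map_sum (fun a ha => (hpos a ha).le) hT
      fun a ha => inv_pos.2 (hpos a ha)
  have hcard : ∑ a ∈ T, p a * (p a)⁻¹ = (support p).ncard := by
    rw [Finset.sum_congr rfl fun a ha => mul_inv_cancel₀ (hpos a ha).ne',
      Set.ncard_eq_toFinset_card']
    simp [T]
  have hH : H p = (∑ a ∈ T, p a * log (p a)⁻¹) / log 2 := by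
    rw [H_eq_sum, Finset.sum_div]
    refine (Finset.sum_subset (Finset.subset_univ _) fun a _ ha => ?_).symm.trans
      (Finset.sum_congr rfl fun a _ => ?_)
    · rw [Set.mem_toFinset, mem_support, not_not] at ha
      simp [ha]
    · rw [log_inv, logb]; ring
  rw [hH, logb, ← hcard]
  exact div_le_div_of_nonneg_right hJensen (log_nonneg one_le_two)

theorem H_le_logb_of_ncard_support_le {A : Type*} [Fintype A] {p : A → ℝ} (hp : IsDist p)
    {N : ℕ} (hN : (support p).ncard ≤ N) : H p ≤ logb 2 N := by
  have hne : (support p).Nonempty := by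
    by_contra h
    rw [Set.not_nonempty_iff_eq_empty, support_eq_empty_iff] at h
    simpa [h] using hp.2
  refine (H_le_logb_ncard_support hp).trans
    (logb_le_logb_of_le one_lt_two ?_ (by exact_mod_cast hN))
  exact_mod_cast (Set.ncard_pos (Set.toFinite _)).2 hne

theorem MI_le_H_right {V A : Type*} [Fintype V] [Fintype A] {r : V → A → ℝ}
    (hr : ∀ v a, 0 ≤ r v a) : MI r ≤ H (fun a => ∑ v, r v a) := by
  have hterm : ∀ v a, (if r v a = 0 then 0 else
      r v a * logb 2 (r v a / ((∑ a', r v a') * (∑ v', r v' a))))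
      ≤ -(r v a * logb 2 (∑ v', r v' a)) := by
    intro v a
    split_ifs with h
    · simp [h]
    have hpos : 0 < r v a := (hr v a).lt_of_ne' h
    have hrow : r v a ≤ ∑ a', r v a' :=
      Finset.single_le_sum (fun a' _ => hr v a') (Finset.mem_univ a)
    have hcol : r v a ≤ ∑ v', r v' a :=
      Finset.single_le_sum (fun v' _ => hr v' a) (Finset.mem_univ v)
    have hcolpos := hpos.trans_le hcol
    -- the pair `(v, a)` is at most as likely as `v` alone
    have hle : r v a / ((∑ a', r v a') * (∑ v', r v' a)) ≤ (∑ v', r v' a)⁻¹ := by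
      rw [← div_div, ← one_div]
      gcongr
      exact (div_le_one (hpos.trans_le hrow)).2 hrow
    have hlog := logb_le_logb_of_le one_lt_two
      (div_pos hpos (mul_pos (hpos.trans_le hrow) hcolpos)) hle
    rw [logb_inv] at hlog
    nlinarith
  calc MI r ≤ ∑ v, ∑ a, -(r v a * logb 2 (∑ v', r v' a)) :=
        Finset.sum_le_sum fun v _ => Finset.sum_le_sum fun a _ => hterm v a
    _ = H (fun a => ∑ v, r v a) := by
        rw [Finset.sum_comm, H_eq_sum]
        simp only [Finset.sum_neg_distrib, Finset.sum_mul]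

theorem MI_mixture {V A : Type*} [Fintype V] [Fintype A] {lam : V → ℝ} {Q : V → A → ℝ}
    {p : A → ℝ} (hlam : ∀ v, 0 ≤ lam v) (hQ : ∀ v, IsDist (Q v))
    (hmix : p = ∑ v, lam v • Q v) :
    MI (fun v a => lam v * Q v a) = H p - ∑ v, lam v * H (Q v) := by
  have hp : ∀ a, p a = ∑ v, lam v * Q v a := fun a => by simp [hmix]
  have hterm : ∀ v a, (if lam v * Q v a = 0 then 0 else
      lam v * Q v a * logb 2 (lam v * Q v a /
        ((∑ a', lam v * Q v a') * (∑ v', lam v' * Q v' a))))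
      = lam v * (Q v a * logb 2 (Q v a)) - lam v * Q v a * logb 2 (p a) := by
    intro v a
    split_ifs with h
    · rcases mul_eq_zero.1 h with h | h <;> simp [h]
    obtain ⟨hl, hq⟩ := mul_ne_zero_iff.1 h
    have hpa : 0 < p a := by
      rw [hp]
      exact ((mul_nonneg (hlam v) ((hQ v).1 a)).lt_of_ne' h).trans_le <|
        Finset.single_le_sum (fun v' _ => mul_nonneg (hlam v') ((hQ v').1 a)) (Finset.mem_univ v)
    rw [← Finset.mul_sum, (hQ v).2, mul_one, ← hp, mul_div_mul_left _ _ hl,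
      logb_div hq hpa.ne']
    ring
  unfold MI
  rw [Finset.sum_congr rfl fun v _ => Finset.sum_congr rfl fun a _ => hterm v a]
  simp only [Finset.sum_sub_distrib, H_eq_sum, ← Finset.mul_sum, Finset.sum_neg_distrib]
  rw [Finset.sum_comm (f := fun v a => lam v * Q v a * logb 2 (p a))]
  simp only [← Finset.sum_mul, ← hp, mul_neg, Finset.sum_neg_distrib]
  ring

theorem exists_ne_zero_map_eq_zero_support_subset {K X W : Type*} [Field K] [Fintype X]
    [AddCommGroup W] [Module K W] [FiniteDimensional K W] (L : (X → K) →ₗ[K] W) {s : Set X}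
    (hs : Module.finrank K W < s.ncard) :
    ∃ w : X → K, w ≠ 0 ∧ L w = 0 ∧ support w ⊆ s := by
  let E := ExtendByZero.linearMap K ((↑) : s → X)
  have hdim : Module.finrank K W < Module.finrank K (s → K) := by
    rwa [Module.finrank_fintype_fun_eq_card, ← Nat.card_eq_fintype_card, Nat.card_coe_set_eq]
  obtain ⟨v, hv, hv0⟩ := (Submodule.ne_bot_iff _).1 (LinearMap.ker_ne_bot_of_finrank_lt
    (f := L ∘ₗ E) hdim)
  have hE : Injective E := extend_injective Subtype.val_injective (0 : X → K)
  refine ⟨E v, fun h => hv0 (hE (h.trans E.map_zero.symm)), hv, fun x hx => ?_⟩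
  by_contra hxs
  exact hx (extend_apply' _ _ _ fun ⟨y, hy⟩ => hxs (hy ▸ y.2))

theorem exists_neg_of_sum_eq_zero {X : Type*} [Fintype X] {w : X → ℝ} (hw : w ≠ 0)
    (hsum : ∑ x, w x = 0) : ∃ x, w x < 0 := by
  by_contra! h
  exact hw (funext fun x =>
    (Finset.sum_eq_zero_iff_of_nonneg fun x _ => h x).1 hsum x (Finset.mem_univ x))

theorem exists_pos_nonneg_add_smul_support_ssubset {X : Type*} [Fintype X] {q w : X → ℝ}
    (hq : 0 ≤ q) (hw : support w ⊆ support q) (hneg : ∃ x, w x < 0) :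
    ∃ t : ℝ, 0 < t ∧ 0 ≤ q + t • w ∧ support (q + t • w) ⊂ support q := by
  set N := Finset.univ.filter fun x => w x < 0
  have hN : N.Nonempty := let ⟨x, hx⟩ := hneg; ⟨x, by simpa [N] using hx⟩
  have hqN : ∀ x ∈ N, 0 < q x := fun x hx =>
    (hq x).lt_of_ne' (hw (Finset.mem_filter.1 hx).2.ne)
  obtain ⟨x₀, hx₀, ht⟩ := Finset.exists_mem_eq_inf' hN fun x => q x / -w x
  set t := N.inf' hN fun x => q x / -w x
  have hwx₀ : w x₀ < 0 := by simpa [N] using hx₀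
  have htpos : 0 < t := (Finset.lt_inf'_iff hN).2 fun x hx =>
    div_pos (hqN x hx) (neg_pos.2 (by simpa [N] using hx))
  refine ⟨t, htpos, fun x => ?_, (Set.ssubset_iff_of_subset fun x hx => ?_).2 ⟨x₀, ?_, ?_⟩⟩
  · simp only [Pi.zero_apply, Pi.add_apply, Pi.smul_apply, smul_eq_mul]
    by_cases hwx : w x < 0
    · have : t ≤ q x / -w x := Finset.inf'_le _ (by simpa [N] using hwx)
      rw [le_div_iff₀ (neg_pos.2 hwx)] at this
      linarith
    · linarith [show 0 ≤ q x from hq x, mul_nonneg htpos.le (not_lt.1 hwx)]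
  · by_contra hqx
    have hwx : w x = 0 := notMem_support.1 fun h => hqx (hw h)
    exact hx (by simp [notMem_support.1 hqx, hwx])
  · exact (hqN x₀ hx₀).ne'
  · simp only [mem_support, Pi.add_apply, Pi.smul_apply, smul_eq_mul, ht, not_not]
    rw [div_neg, neg_mul, div_mul_cancel₀ _ hwx₀.ne, add_neg_cancel]

theorem mem_convexHull_nonneg_fiber_ncard_support_le {X W : Type*} [Fintype X]
    [AddCommGroup W] [Module ℝ W] [FiniteDimensional ℝ W] (L : (X → ℝ) →ₗ[ℝ] W)
    (hL : ∀ w, L w = 0 → ∑ x, w x = 0) {q : X → ℝ} (hq : 0 ≤ q) :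
    q ∈ convexHull ℝ {Q | 0 ≤ Q ∧ L Q = L q ∧ (support Q).ncard ≤ Module.finrank ℝ W} := by
  generalize hb : L q = b
  induction hN : (support q).ncard using Nat.strong_induction_on generalizing q with
  | _ N ih =>
  by_cases hsmall : N ≤ Module.finrank ℝ W
  · exact subset_convexHull ℝ _ ⟨hq, hb, hN ▸ hsmall⟩
  obtain ⟨w, hw, hLw, hwq⟩ :=
    exists_ne_zero_map_eq_zero_support_subset L (s := support q) (hN ▸ not_le.1 hsmall)
  have hsum := hL w hLw
  -- `w` has entries of both signs, so `q` can be pushed in both directions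
  obtain ⟨s, hs, hqs, hss⟩ := exists_pos_nonneg_add_smul_support_ssubset hq hwq
    (exists_neg_of_sum_eq_zero hw hsum)
  obtain ⟨t, ht, hqt, hst⟩ := exists_pos_nonneg_add_smul_support_ssubset hq
    (support_neg w ▸ hwq) (exists_neg_of_sum_eq_zero (neg_ne_zero.2 hw)
      (by simp [Finset.sum_neg_distrib, hsum]))
  have hs' := ih _ (hN ▸ Set.ncard_lt_ncard hss) hqs (by simp [hLw, hb]) rfl
  have ht' := ih _ (hN ▸ Set.ncard_lt_ncard hst) hqt (by simp [hLw, hb]) rfl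
  have hq_eq : (t / (s + t)) • (q + s • w) + (s / (s + t)) • (q + t • -w) = q := by
    ext x
    simp only [Pi.add_apply, Pi.smul_apply, Pi.neg_apply, smul_eq_mul]
    field_simp
    ring
  exact hq_eq ▸ convex_convexHull ℝ _ hs' ht' (by positivity) (by positivity)
    (by field_simp; ring)

theorem sum_selfJoint {X : Type*} [Fintype X] (pX : X → ℝ) (x : X) :
    ∑ y, selfJoint pX x y = pX x := by
  simp [selfJoint]

theorem sum_mul_selfJoint {X V : Type*} [Fintype X] (pX : X → ℝ) (c : X → V → ℝ) (v : V)
    (y : X) : ∑ x, c x v * selfJoint pX x y = c y v * pX y := by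
  simp [selfJoint, mul_ite]

theorem exists_isChannel_mul_eq_of_mixture {X V : Type*} [Fintype X] [Fintype V]
    {lam : V → ℝ} {Q : V → X → ℝ} {p : X → ℝ} (hlam : IsDist lam) (hQ : ∀ v, 0 ≤ Q v)
    (hmix : p = ∑ v, lam v • Q v) :
    ∃ c : X → V → ℝ, IsChannel c ∧ ∀ x v, c x v * p x = lam v * Q v x := by
  have hp : ∀ x, p x = ∑ v, lam v * Q v x := fun x => by simp [hmix]
  have hterm : ∀ v x, 0 ≤ lam v * Q v x := fun v x => mul_nonneg (hlam.1 v) (hQ v x)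
  -- off the support of `p` any distribution on `V` will do; we reuse `lam`
  refine ⟨fun x v => if p x = 0 then lam v else lam v * Q v x / p x, ⟨fun x v => ?_, fun x => ?_⟩,
    fun x v => ?_⟩
  all_goals by_cases h : p x = 0 <;> simp only [h, if_true, if_false]
  · exact hlam.1 v
  · exact div_nonneg (hterm v x) (hp x ▸ Finset.sum_nonneg fun v _ => hterm v x)
  · exact hlam.2
  · rw [← Finset.sum_div, ← hp, div_self h]
  · rw [mul_zero, eq_comm]
    exact (Finset.sum_eq_zero_iff_of_nonneg fun v _ => hterm v x).1 (hp x ▸ h) v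
      (Finset.mem_univ v)
  · exact div_mul_cancel₀ _ h

theorem indepWithFun_mixture {X V T : Type*} [Fintype X] [Fintype V] {lam : V → ℝ}
    {Q : V → X → ℝ} (f : X → T) (hlam : ∑ v, lam v = 1) (hQ : ∀ v, ∑ x, Q v x = 1)
    (μ : T → ℝ) (hμ : ∀ v t, ∑ x, (if f x = t then Q v x else 0) = μ t) :
    IndepWithFun (fun v x => lam v * Q v x) f := by
  have hmarg : ∀ v t, ∑ x, (if f x = t then lam v * Q v x else 0) = lam v * μ t := by
    intro v t
    simp_rw [← mul_ite_zero, ← Finset.mul_sum, hμ]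
  intro v t
  simp only [hmarg, ← Finset.mul_sum, hQ, mul_one, ← Finset.sum_mul, hlam, one_mul]

/-- Rows of the paper's constraint matrix: one for the total mass, and one for each value `t`
of each `X^α`, `α ∈ A`. -/
abbrev ConstraintIndex {n : ℕ} (𝓧 : Fin n → Type*) (A : Finset (Finset (Fin n))) : Type _ :=
  Unit ⊕ Σ α : A, ∀ i : (α : Finset (Fin n)), 𝓧 i

noncomputable def constraintMatrix {n : ℕ} (𝓧 : Fin n → Type*)
    (A : Finset (Finset (Fin n))) :
    Matrix (ConstraintIndex 𝓧 A) (∀ i, 𝓧 i) ℝ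
  | .inl _, _ => 1
  | .inr ⟨α, t⟩, x => if restr α.1 x = t then 1 else 0

section Synergy

variable {n : ℕ} {𝓧 : Fin n → Type*} [∀ i, Fintype (𝓧 i)]

theorem constraintMatrix_mulVec_inl (A : Finset (Finset (Fin n))) (q : (∀ i, 𝓧 i) → ℝ) :
    (constraintMatrix 𝓧 A *ᵥ q) (.inl ()) = ∑ x, q x := by
  simp [constraintMatrix, Matrix.mulVec, dotProduct]

theorem constraintMatrix_mulVec_inr (A : Finset (Finset (Fin n))) (q : (∀ i, 𝓧 i) → ℝ)
    (α : A) (t : ∀ i : (α : Finset (Fin n)), 𝓧 i) :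
    (constraintMatrix 𝓧 A *ᵥ q) (.inr ⟨α, t⟩) = ∑ x, if restr α.1 x = t then q x else 0 := by
  simp [constraintMatrix, Matrix.mulVec, dotProduct]

theorem isDist_of_constraintMatrix_mulVec_eq {A : Finset (Finset (Fin n))}
    {p q : (∀ i, 𝓧 i) → ℝ} (hp : IsDist p) (hq : 0 ≤ q)
    (hpq : constraintMatrix 𝓧 A *ᵥ q = constraintMatrix 𝓧 A *ᵥ p) : IsDist q :=
  ⟨hq, by simpa [constraintMatrix_mulVec_inl, hp.2] using congrFun hpq (.inl ())⟩

theorem MI_mixture_mem_synSet_selfJoint {A : Finset (Finset (Fin n))} {pX : (∀ i, 𝓧 i) → ℝ}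
    {k : ℕ} {lam : Fin k → ℝ} {Q : Fin k → (∀ i, 𝓧 i) → ℝ} (hlam : IsDist lam)
    (hQ : ∀ v, IsDist (Q v))
    (hfiber : ∀ v, constraintMatrix 𝓧 A *ᵥ Q v = constraintMatrix 𝓧 A *ᵥ pX)
    (hmix : pX = ∑ v, lam v • Q v) :
    MI (fun v y => lam v * Q v y) ∈ synSet (selfJoint pX) A := by
  obtain ⟨c, hc, hcQ⟩ := exists_isChannel_mul_eq_of_mixture hlam (fun v => (hQ v).1) hmix
  refine ⟨k, c, hc, fun α hα => ?_, ?_⟩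
  · have hjoint : (fun v x => c x v * ∑ y, selfJoint pX x y) = fun v x => lam v * Q v x := by
      funext v x
      rw [sum_selfJoint, hcQ]
    rw [hjoint]
    refine indepWithFun_mixture _ hlam.2 (fun v => (hQ v).2)
      (fun t => ∑ x, if restr α x = t then pX x else 0) fun v t => ?_
    have h := congrFun (hfiber v) (.inr ⟨⟨α, hα⟩, t⟩)
    rw [constraintMatrix_mulVec_inr, constraintMatrix_mulVec_inr] at h
    convert h
  · congr
    funext v y
    rw [sum_mul_selfJoint, hcQ]

theorem exists_mem_synSet_selfJoint_ge (A : Finset (Finset (Fin n)))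
    {pX : (∀ i, 𝓧 i) → ℝ} (hpX : IsDist pX) :
    ∃ r ∈ synSet (selfJoint pX) A,
      H pX - logb 2 (Fintype.card (ConstraintIndex 𝓧 A)) ≤ r := by
  have hdec := mem_convexHull_nonneg_fiber_ncard_support_le (constraintMatrix 𝓧 A).mulVecLin
    (fun w hw => by simpa [constraintMatrix_mulVec_inl] using congrFun hw (.inl ())) hpX.1
  rw [Module.finrank_fintype_fun_eq_card] at hdec
  obtain ⟨ι, _, w, z, hw0, hw1, hz, hwz⟩ := mem_convexHull_iff_exists_fintype.1 hdec
  set e := (Fintype.equivFin ι).symm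
  have hlam : IsDist (w ∘ e) := ⟨fun v => hw0 _, by simpa [e.sum_comp] using hw1⟩
  have hQ : ∀ v, IsDist (z (e v)) := fun v =>
    isDist_of_constraintMatrix_mulVec_eq hpX (hz _).1 (hz _).2.1
  have hmix : pX = ∑ v, (w ∘ e) v • z (e v) := by
    rw [← hwz]
    exact (e.sum_comp fun i => w i • z i).symm
  refine ⟨_, MI_mixture_mem_synSet_selfJoint hlam hQ (fun v => (hz _).2.1) hmix, ?_⟩
  rw [MI_mixture hlam.1 hQ hmix, sub_le_sub_iff_left]
  calc ∑ v, (w ∘ e) v * H (z (e v))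
      ≤ ∑ v, (w ∘ e) v * logb 2 (Fintype.card (ConstraintIndex 𝓧 A)) :=
        Finset.sum_le_sum fun v _ => mul_le_mul_of_nonneg_left
          (H_le_logb_of_ncard_support_le (hQ v) (hz _).2.2) (hlam.1 v)
    _ = logb 2 (Fintype.card (ConstraintIndex 𝓧 A)) := by rw [← Finset.sum_mul, hlam.2, one_mul]

theorem le_H_of_mem_synSet_selfJoint {A : Finset (Finset (Fin n))} {pX : (∀ i, 𝓧 i) → ℝ}
    (hpX : ∀ x, 0 ≤ pX x) {r : ℝ} (hr : r ∈ synSet (selfJoint pX) A) : r ≤ H pX := by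
  obtain ⟨k, c, hc, -, rfl⟩ := hr
  simp only [sum_mul_selfJoint]
  refine (MI_le_H_right fun v y => mul_nonneg (hc.1 y v) (hpX y)).trans_eq ?_
  simp [← Finset.sum_mul, hc.2]

theorem Syn_selfJoint_le_H (A : Finset (Finset (Fin n))) {pX : (∀ i, 𝓧 i) → ℝ}
    (hpX : IsDist pX) : Syn (selfJoint pX) A ≤ H pX :=
  let ⟨_, hr, _⟩ := exists_mem_synSet_selfJoint_ge A hpX
  csSup_le ⟨_, hr⟩ fun _ => le_H_of_mem_synSet_selfJoint hpX.1

theorem H_sub_logb_card_le_Syn_selfJoint (A : Finset (Finset (Fin n)))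
    {pX : (∀ i, 𝓧 i) → ℝ} (hpX : IsDist pX) :
    H pX - logb 2 (Fintype.card (ConstraintIndex 𝓧 A)) ≤ Syn (selfJoint pX) A :=
  let ⟨_, hr, hge⟩ := exists_mem_synSet_selfJoint_ge A hpX
  le_csSup_of_le ⟨H pX, fun _ => le_H_of_mem_synSet_selfJoint hpX.1⟩ hr hge

end Synergy

theorem card_constraintIndex_le {n K : ℕ} (𝓧 : Fin n → Type*) [∀ i, Fintype (𝓧 i)]
    (hK : ∀ i, Fintype.card (𝓧 i) ≤ K) (m : ℕ) :
    Fintype.card (ConstraintIndex 𝓧 (Finset.univ.filter fun α => α.card = m))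
      ≤ 2 * ((n + 1) * (K + 1)) ^ m := by
  set A := (Finset.univ : Finset (Finset (Fin n))).filter fun α => α.card = m
  have hA : A.card ≤ (n + 1) ^ m := by
    rw [show A = Finset.powersetCard m Finset.univ by ext; simp [A, Finset.mem_powersetCard],
      Finset.card_powersetCard, Finset.card_univ, Fintype.card_fin]
    exact (Nat.choose_le_pow n m).trans (Nat.pow_le_pow_left n.le_succ m)
  have hfiber : ∀ α : A, Fintype.card (∀ i : (α : Finset (Fin n)), 𝓧 i) ≤ (K + 1) ^ m := by
    intro ⟨α, hα⟩
    rw [Fintype.card_pi, ← (Finset.mem_filter.1 hα).2, ← Fintype.card_coe α, ← Finset.card_univ,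
      ← Finset.prod_const]
    exact Finset.prod_le_prod' fun i _ => (hK i).trans K.le_succ
  calc Fintype.card (ConstraintIndex 𝓧 A)
      = 1 + ∑ α : A, Fintype.card (∀ i : (α : Finset (Fin n)), 𝓧 i) := by
        simp [Fintype.card_sigma]
    _ ≤ 1 + A.card * (K + 1) ^ m := by
        grw [Finset.sum_le_sum fun α _ => hfiber α]
        simp
    _ ≤ ((n + 1) * (K + 1)) ^ m + ((n + 1) * (K + 1)) ^ m := by
        have hone : 1 ≤ ((n + 1) * (K + 1)) ^ m := Nat.one_le_pow _ _ (by positivity)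
        rw [mul_pow] at hone ⊢
        gcongr
    _ = 2 * ((n + 1) * (K + 1)) ^ m := by ring

theorem tendsto_logb_natCast_add_one_div_atTop :
    Tendsto (fun n : ℕ => logb 2 ((n : ℝ) + 1) / n) atTop (𝓝 0) := by
  refine ((tendsto_pow_logb_div_mul_add_atTop (b := 2) 1 (-1) 1 one_ne_zero).comp
    (tendsto_atTop_add_const_right _ 1 tendsto_natCast_atTop_atTop)).congr fun n => ?_
  simp

theorem tendsto_logb_card_constraintIndex_div_atTop {K : ℕ} (𝓧 : (n : ℕ) → Fin n → Type*)
    [∀ n i, Fintype (𝓧 n i)] (hK : ∀ n i, Fintype.card (𝓧 n i) ≤ K) (m : ℕ) :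
    Tendsto (fun n : ℕ => logb 2 (Fintype.card
        (ConstraintIndex (𝓧 n) (Finset.univ.filter fun α => α.card = m))) / n)
      atTop (𝓝 0) := by
  set C : ℝ := 1 + m * logb 2 (K + 1)
  have hbound : ∀ n : ℕ, logb 2 (Fintype.card
      (ConstraintIndex (𝓧 n) (Finset.univ.filter fun α => α.card = m)))
      ≤ C + m * logb 2 ((n : ℝ) + 1) := by
    intro n
    calc _ ≤ logb 2 (2 * (((n : ℝ) + 1) * (K + 1)) ^ m) := by
          refine logb_le_logb_of_le one_lt_two (by exact_mod_cast Fintype.card_pos) ?_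
          exact_mod_cast card_constraintIndex_le (𝓧 n) (hK n) m
      _ = C + m * logb 2 ((n : ℝ) + 1) := by
          rw [logb_mul two_ne_zero (by positivity), logb_self_eq_one one_lt_two, logb_pow,
            logb_mul (by positivity) (by positivity)]
          ring
  have hupper : Tendsto (fun n : ℕ => C * (1 / (n : ℝ)) + m * (logb 2 ((n : ℝ) + 1) / n))
      atTop (𝓝 0) := by
    simpa using (tendsto_one_div_atTop_nhds_zero_nat.const_mul C).add
      (tendsto_logb_natCast_add_one_div_atTop.const_mul (m : ℝ))
  refine tendsto_of_tendsto_of_tendsto_of_le_of_le tendsto_const_nhds hupper (fun n => ?_)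
    fun n => ?_
  · exact div_nonneg (logb_nonneg one_lt_two (by exact_mod_cast Fintype.card_pos)) n.cast_nonneg
  · dsimp only
    rw [mul_one_div, mul_div_assoc', ← add_div]
    exact div_le_div_of_nonneg_right (hbound n) n.cast_nonneg

theorem tendsto_div_nhds_one_of_sub_le_of_le {α : Type*} {l : Filter α} {f g d : α → ℝ}
    (hlow : ∀ᶠ x in l, g x - d x ≤ f x) (hup : ∀ᶠ x in l, f x ≤ g x) (hpos : ∀ᶠ x in l, 0 < g x)
    (hd : Tendsto (fun x => d x / g x) l (𝓝 0)) :
    Tendsto (fun x => f x / g x) l (𝓝 1) := by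
  refine tendsto_of_tendsto_of_tendsto_of_le_of_le' (by simpa using tendsto_const_nhds.sub hd)
    tendsto_const_nhds ?_ ?_
  · filter_upwards [hlow, hpos] with x hx hgx
    rw [← div_self hgx.ne', ← sub_div]
    exact div_le_div_of_nonneg_right hx hgx.le
  · filter_upwards [hup, hpos] with x hx hgx
    exact (div_le_one hgx).2 hx

/-- asymptotic dominance of synergy. If all alphabets have cardinality
at most `K` and `H(X)/n → c > 0`, then for fixed `m` the backbone self-synergy
`B^m(X) = S^{γ_m}(X → X)` satisfies `B^m(X)/H(X) → 1`. -/
theorem backbone_asymptotic_dominance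
    (K : ℕ) (𝓧 : (n : ℕ) → Fin n → Type) [∀ n i, Fintype (𝓧 n i)]
    (hK : ∀ n i, Fintype.card (𝓧 n i) ≤ K)
    (pX : (n : ℕ) → (∀ i, 𝓧 n i) → ℝ) (hpX : ∀ n, IsDist (pX n))
    (c : ℝ) (hc : 0 < c)
    (hH : Filter.Tendsto (fun n => H (pX n) / n) Filter.atTop (nhds c))
    (m : ℕ) :
    Filter.Tendsto (fun n =>
        Syn (selfJoint (pX n))
            ((Finset.univ : Finset (Finset (Fin n))).filter (fun α => α.card = m))
          / H (pX n))
      Filter.atTop (nhds 1) := by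
  have hHpos : ∀ᶠ n : ℕ in atTop, 0 < H (pX n) := by
    filter_upwards [hH.eventually (eventually_gt_nhds hc), eventually_gt_atTop 0] with n h hn
    exact (div_pos_iff_of_pos_right (by exact_mod_cast hn)).1 h
  -- the defect `logb 2 (#rows)` is `O(log n)` while `H` grows linearly
  have hdefect := (tendsto_logb_card_constraintIndex_div_atTop 𝓧 hK m).div hH hc.ne'
  rw [zero_div] at hdefect
  refine tendsto_div_nhds_one_of_sub_le_of_le
    (.of_forall fun n => H_sub_logb_card_le_Syn_selfJoint _ (hpX n))
    (.of_forall fun n => Syn_selfJoint_le_H _ (hpX n)) hHpos (hdefect.congr' ?_)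
  filter_upwards [eventually_gt_atTop 0] with n hn
  exact div_div_div_cancel_right₀ (by positivity) _ _
end

section
/- For the backbone constraints γ_m = {α ⊆ [n] : |α| = m}, the backbone synergies are monotone: 0 = B^n(X → Y) ≤ B^{n-1}(X → Y) ≤ ... ≤ B^1(X → Y) ≤ B^0(X → Y) = I(X;Y). -/
open Finset
open scoped BigOperators Classical

/-! A constant channel satisfies every constraint, so each `B^m` is the supremum of a nonempty set
of reals, bounded above by `I(X;Y)` by the data processing inequality. Independence of `V` from
`X^β` passes to every function of `X^β`, in particular to `X^α` for `α ⊆ β`; since every `m`-set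
lies in an `(m+1)`-set, channels admissible for `γ_{m+1}` are admissible for `γ_m`, whence
`B^{m+1} ≤ B^m`. For `m = n` the constraint reads `V ⫫ X`, which through the Markov chain
`V - X - Y` makes the joint law of `(V, Y)` a product, so `B^n = 0`; for `m = 0` there is no
constraint and a bijective relabelling of `X` attains `I(X;Y)`. -/

theorem mul_log_le_mul_log_div {a b r : ℝ} (ha : 0 ≤ a) (hb : 0 ≤ b) (hab : b = 0 → a = 0)
    (hr : 0 < r) : a * Real.log r + a - b * r ≤ a * Real.log (a / b) := by
  rcases ha.eq_or_lt with rfl | ha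
  · simpa using mul_nonneg hb hr.le
  have hb : 0 < b := hb.lt_of_ne fun h => ha.ne' (hab h.symm)
  have key := Real.log_le_sub_one_of_pos (by positivity : 0 < b * r / a)
  rw [Real.log_div (by positivity) ha.ne', Real.log_mul hb.ne' hr.ne'] at key
  rw [Real.log_div ha.ne' hb.ne']
  have : a * (b * r / a - 1) = b * r - a := by field_simp
  nlinarith

/-- The log-sum inequality. -/
theorem sum_mul_logb_div_le {ι : Type*} [Fintype ι] {a b : ι → ℝ} (ha : ∀ i, 0 ≤ a i)
    (hb : ∀ i, 0 ≤ b i) (hab : ∀ i, b i = 0 → a i = 0) :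
    (∑ i, a i) * Real.logb 2 ((∑ i, a i) / ∑ i, b i) ≤ ∑ i, a i * Real.logb 2 (a i / b i) := by
  simp only [Real.logb, ← mul_div_assoc, ← Finset.sum_div]
  refine div_le_div_of_nonneg_right ?_ (Real.log_nonneg one_le_two)
  rcases (Finset.sum_nonneg fun i _ => ha i).eq_or_lt with hA | hA
  · have : ∀ i, a i = 0 := fun i => (Finset.sum_eq_zero_iff_of_nonneg fun i _ => ha i).1
      hA.symm i (Finset.mem_univ i)
    simp [this]
  have hB : 0 < ∑ i, b i := by
    obtain ⟨i, -, hi⟩ := (Finset.sum_pos_iff_of_nonneg fun i _ => ha i).1 hA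
    refine (Finset.sum_pos_iff_of_nonneg fun i _ => hb i).2 ⟨i, Finset.mem_univ i, ?_⟩
    exact (hb i).lt_of_ne fun h => hi.ne' (hab i h.symm)
  calc (∑ i, a i) * Real.log ((∑ i, a i) / ∑ i, b i)
      = ∑ i, (a i * Real.log ((∑ i, a i) / ∑ i, b i) + a i
          - b i * ((∑ i, a i) / ∑ i, b i)) := by
        rw [Finset.sum_sub_distrib, Finset.sum_add_distrib, ← Finset.sum_mul, ← Finset.sum_mul]
        field_simp
        ring
    _ ≤ ∑ i, a i * Real.log (a i / b i) :=
        Finset.sum_le_sum fun i _ => mul_log_le_mul_log_div (ha i) (hb i) (hab i) (by positivity)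

theorem MI_eq_sum_s16 {A B : Type*} [Fintype A] [Fintype B] (p : A → B → ℝ) :
    MI p = ∑ a, ∑ b, p a b * Real.logb 2 (p a b / ((∑ b', p a b') * ∑ a', p a' b)) := by
  unfold MI
  refine Finset.sum_congr rfl fun a _ => Finset.sum_congr rfl fun b _ => ?_
  split_ifs with h <;> simp [h]

theorem le_sum_left {X Y : Type*} [Fintype Y] {p : X → Y → ℝ} (hp : ∀ x y, 0 ≤ p x y)
    (x : X) (y : Y) :
    p x y ≤ ∑ y', p x y' :=
  Finset.single_le_sum (fun y _ => hp x y) (Finset.mem_univ y)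

theorem le_sum_right {X Y : Type*} [Fintype X] {p : X → Y → ℝ} (hp : ∀ x y, 0 ≤ p x y)
    (x : X) (y : Y) :
    p x y ≤ ∑ x', p x' y :=
  Finset.single_le_sum (fun x _ => hp x y) (Finset.mem_univ x)

section MutualInformation

variable {X Y V : Type*} [Fintype X] [Fintype Y] [Fintype V]

/-- The data processing inequality `I(V;Y) ≤ I(X;Y)` for `V - X - Y`. -/
theorem MI_comp_channel_le {p : X → Y → ℝ} (hp : IsJoint p) {c : X → V → ℝ}
    (hc : IsChannel c) : MI (fun v y => ∑ x, c x v * p x y) ≤ MI p := by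
  set g : X → Y → ℝ := fun x y => p x y * Real.logb 2 (p x y / ((∑ y', p x y') * ∑ x', p x' y))
  have hrow : ∀ v, ∑ y, ∑ x, c x v * p x y = ∑ x, c x v * ∑ y, p x y := fun v => by
    rw [Finset.sum_comm]; simp only [Finset.mul_sum]
  have hcol : ∀ y, ∑ v, ∑ x, c x v * p x y = ∑ x, p x y := fun y => by
    rw [Finset.sum_comm]; simp only [← Finset.sum_mul, hc.2, one_mul]
  have hterm : ∀ v y x, c x v * p x y *
      Real.logb 2 (c x v * p x y / (c x v * (∑ y', p x y') * ∑ x', p x' y)) = c x v * g x y := by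
    intro v y x
    rcases eq_or_ne (c x v) 0 with h | h
    · simp [h]
    · rw [mul_assoc (c x v) (∑ y', p x y'), mul_div_mul_left _ _ h, mul_assoc]
  have hpX : ∀ x, 0 ≤ ∑ y, p x y := fun x => Finset.sum_nonneg fun y _ => hp.1 x y
  have hpY : ∀ y, 0 ≤ ∑ x, p x y := fun y => Finset.sum_nonneg fun x _ => hp.1 x y
  rw [MI_eq_sum_s16, MI_eq_sum_s16]
  calc _ ≤ ∑ v, ∑ y, ∑ x, c x v * p x y *
          Real.logb 2 (c x v * p x y / (c x v * (∑ y', p x y') * ∑ x', p x' y)) := by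
        refine Finset.sum_le_sum fun v _ => Finset.sum_le_sum fun y _ => ?_
        have hsum := sum_mul_logb_div_le (fun x => mul_nonneg (hc.1 x v) (hp.1 x y))
          (fun x => mul_nonneg (mul_nonneg (hc.1 x v) (hpX x)) (hpY y)) fun x h => ?_
        · rw [hrow, hcol]
          rwa [← Finset.sum_mul (f := fun x => c x v * ∑ y', p x y')] at hsum
        rcases mul_eq_zero.1 h with h | h
        · rcases mul_eq_zero.1 h with h | h
          · simp [h]
          · simp [(h ▸ le_sum_left hp.1 x y).antisymm (hp.1 x y)]
        · simp [(h ▸ le_sum_right hp.1 x y).antisymm (hp.1 x y)]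
    _ = ∑ v, ∑ x, ∑ y, c x v * g x y := by
        simp only [hterm]
        exact Finset.sum_congr rfl fun v _ => Finset.sum_comm
    _ = ∑ x, ∑ y, ∑ v, c x v * g x y := by
        rw [Finset.sum_comm]; exact Finset.sum_congr rfl fun x _ => Finset.sum_comm
    _ = ∑ x, ∑ y, g x y := by simp only [← Finset.sum_mul, hc.2, one_mul]

theorem MI_mul_eq_zero {f : V → ℝ} {g : Y → ℝ} (hf : ∑ v, f v = 1) (hg : ∑ y, g y = 1) :
    MI (fun v y => f v * g y) = 0 := by
  rw [MI_eq_sum_s16]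
  refine Finset.sum_eq_zero fun v _ => Finset.sum_eq_zero fun y _ => ?_
  rw [← Finset.mul_sum, ← Finset.sum_mul, hf, hg, mul_one, one_mul]
  rcases eq_or_ne (f v * g y) 0 with h | h
  · rw [h, zero_mul]
  · rw [div_self h, Real.logb_one, mul_zero]

theorem MI_comp_equiv (e : V ≃ X) (p : X → Y → ℝ) : MI (fun v y => p (e v) y) = MI p := by
  have hcol : ∀ y, ∑ v, p (e v) y = ∑ x, p x y := fun y => e.sum_comp fun x => p x y
  simp only [MI_eq_sum_s16, hcol]
  exact e.sum_comp fun x => ∑ y, p x y * Real.logb 2 (p x y / ((∑ y', p x y') * ∑ x', p x' y))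

end MutualInformation

theorem sum_ite_comp_eq {X S T : Type*} [Fintype X] [Fintype S] (f : X → S) (g : S → T)
    (w : X → ℝ) (t : T) :
    ∑ x, (if g (f x) = t then w x else 0) =
      ∑ s, if g s = t then ∑ x, (if f x = s then w x else 0) else 0 := by
  calc _ = ∑ x, ∑ s, if f x = s then (if g s = t then w x else 0) else 0 := by
        simp only [Finset.sum_ite_eq, Finset.mem_univ, if_true]
    _ = _ := by
        rw [Finset.sum_comm]
        refine Finset.sum_congr rfl fun s _ => ?_
        split_ifs <;> simp

namespace IndepWithFun

variable {V X S T : Type*} [Fintype V] [Fintype X] {q : V → X → ℝ}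

theorem comp [Fintype S] {f : X → S} (h : IndepWithFun q f) (g : S → T) :
    IndepWithFun q (g ∘ f) := by
  intro v t
  simp only [Function.comp_apply, sum_ite_comp_eq f g]
  calc _ = ∑ s, if g s = t then
          (∑ x, q v x) * ∑ v', ∑ x, (if f x = s then q v' x else 0) else 0 :=
        Finset.sum_congr rfl fun s _ => by split_ifs <;> simp [h v s]
    _ = (∑ x, q v x) * ∑ s, if g s = t then
          ∑ v', ∑ x, (if f x = s then q v' x else 0) else 0 := by
        rw [Finset.mul_sum]
        exact Finset.sum_congr rfl fun s _ => by split_ifs <;> simp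
    _ = _ := by
        rw [Finset.sum_comm (s := Finset.univ (α := V))]
        exact congrArg _ (Finset.sum_congr rfl fun s _ => by split_ifs <;> simp)

theorem of_subsingleton_left [Subsingleton V] (hq : ∑ v, ∑ x, q v x = 1) (f : X → T) :
    IndepWithFun q f := by
  intro v t
  rw [Fintype.sum_subsingleton _ v] at hq ⊢
  rw [hq, one_mul]

theorem of_subsingleton_right [Subsingleton T] (hq : ∑ v, ∑ x, q v x = 1) (f : X → T) :
    IndepWithFun q f := by
  intro v t
  simp only [Subsingleton.elim _ t, if_true, hq, mul_one]

theorem apply_eq_mul_of_injective {f : X → T} (h : IndepWithFun q f) (hf : f.Injective)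
    (v : V) (x : X) : q v x = (∑ x', q v x') * ∑ v', q v' x := by
  simpa only [hf.eq_iff, Finset.sum_ite_eq', Finset.mem_univ, if_true] using h v (f x)

end IndepWithFun

theorem MI_comp_channel_eq_zero {X Y V T : Type*} [Fintype X] [Fintype Y] [Fintype V]
    {p : X → Y → ℝ} (hp : IsJoint p) {c : X → V → ℝ} (hc : IsChannel c) {f : X → T}
    (hf : f.Injective) (hind : IndepWithFun (fun v x => c x v * ∑ y, p x y) f) :
    MI (fun v y => ∑ x, c x v * p x y) = 0 := by
  set qV : V → ℝ := fun v => ∑ x, c x v * ∑ y, p x y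
  have hfac : ∀ v x y, c x v * p x y = qV v * p x y := by
    intro v x y
    have h := hind.apply_eq_mul_of_injective hf v x
    simp only [← Finset.sum_mul, hc.2, one_mul] at h
    rcases eq_or_ne (∑ y, p x y) 0 with h0 | h0
    · simp [(h0 ▸ le_sum_left hp.1 x y).antisymm (hp.1 x y)]
    · rw [mul_right_cancel₀ h0 h]
  have hqV : ∑ v, qV v = 1 := by
    rw [Finset.sum_comm]
    simpa only [← Finset.sum_mul, hc.2, one_mul] using hp.2
  simp only [hfac, ← Finset.mul_sum]
  exact MI_mul_eq_zero hqV (by rw [Finset.sum_comm]; exact hp.2)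

/-- The constraint order `A ≼_c B`. -/
def ConstraintLE {n : ℕ} (A B : Finset (Finset (Fin n))) : Prop :=
  ∀ α ∈ A, ∃ β ∈ B, α ⊆ β

/-- The backbone constraint `γ_m`. -/
def backbone (n m : ℕ) : Finset (Finset (Fin n)) :=
  Finset.univ.filter fun α => α.card = m

theorem backbone_constraintLE_succ {n m : ℕ} (hm : m < n) :
    ConstraintLE (backbone n m) (backbone n (m + 1)) := by
  intro α hα
  obtain ⟨β, hαβ, -, hβ⟩ := Finset.exists_subsuperset_card_eq (Finset.subset_univ α)
    (n := m + 1) (by simp_all [backbone]) (by simpa using hm)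
  exact ⟨β, by simpa [backbone] using hβ, hαβ⟩

theorem restr_univ_injective {n : ℕ} {𝓧 : Fin n → Type*} :
    (restr (𝓧 := 𝓧) Finset.univ).Injective :=
  fun _ _ h => funext fun i => congrFun h ⟨i, Finset.mem_univ i⟩

section Synergy

variable {n : ℕ} {𝓧 : Fin n → Type*} [∀ i, Fintype (𝓧 i)] {Y : Type*} [Fintype Y]
  {p : (∀ i, 𝓧 i) → Y → ℝ} {A B : Finset (Finset (Fin n))}

theorem zero_mem_synSet (hp : IsJoint p) (A : Finset (Finset (Fin n))) : 0 ∈ synSet p A := by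
  refine ⟨1, fun _ _ => 1, ⟨fun _ _ => zero_le_one, fun _ => by simp⟩,
    fun α _ => IndepWithFun.of_subsingleton_left (by simpa using hp.2) _, ?_⟩
  convert (MI_mul_eq_zero (f := fun _ : Fin 1 => (1 : ℝ)) (by simp)
    (by rw [Finset.sum_comm]; exact hp.2)).symm using 3
  simp

theorem le_MI_of_mem_synSet (hp : IsJoint p) {r : ℝ} (hr : r ∈ synSet p A) : r ≤ MI p := by
  obtain ⟨k, c, hc, -, rfl⟩ := hr
  exact MI_comp_channel_le hp hc

theorem bddAbove_synSet (hp : IsJoint p) (A : Finset (Finset (Fin n))) :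
    BddAbove (synSet p A) :=
  ⟨MI p, fun _ => le_MI_of_mem_synSet hp⟩

theorem synSet_subset_of_constraintLE (h : ConstraintLE A B) : synSet p B ⊆ synSet p A := by
  rintro r ⟨k, c, hc, hind, rfl⟩
  refine ⟨k, c, hc, fun α hα => ?_, rfl⟩
  obtain ⟨β, hβ, hαβ⟩ := h α hα
  exact (hind β hβ).comp fun (s : ∀ i : β, 𝓧 i.1) (i : α) => s ⟨i.1, hαβ i.2⟩

theorem Syn_le_Syn_of_constraintLE (hp : IsJoint p) (h : ConstraintLE A B) :
    Syn p B ≤ Syn p A :=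
  csSup_le_csSup (bddAbove_synSet hp A) ⟨0, zero_mem_synSet hp B⟩
    (synSet_subset_of_constraintLE h)

theorem Syn_eq_zero_of_univ_mem (hp : IsJoint p) (hA : Finset.univ ∈ A) : Syn p A = 0 := by
  suffices synSet p A = {0} by rw [Syn, this, csSup_singleton]
  refine Set.eq_singleton_iff_unique_mem.2 ⟨zero_mem_synSet hp A, ?_⟩
  rintro r ⟨k, c, hc, hind, rfl⟩
  exact MI_comp_channel_eq_zero hp hc restr_univ_injective (hind _ hA)

theorem Syn_eq_MI_of_forall_eq_empty (hp : IsJoint p) (hA : ∀ α ∈ A, α = ∅) :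
    Syn p A = MI p := by
  set e := Fintype.equivFin (∀ i, 𝓧 i)
  have hMI : MI p ∈ synSet p A := by
    refine ⟨_, fun x v => if e x = v then 1 else 0, ⟨fun _ _ => by positivity, fun _ => by simp⟩,
      fun α hα => ?_, ?_⟩
    · obtain rfl := hA α hα
      refine IndepWithFun.of_subsingleton_right ?_ _
      simpa [Finset.sum_comm (γ := Fin _), Finset.sum_ite_eq] using hp.2
    · rw [← MI_comp_equiv e.symm p]
      congr! 2 with v y
      simp [← e.eq_symm_apply]
  exact le_antisymm (csSup_le ⟨0, zero_mem_synSet hp A⟩ fun _ => le_MI_of_mem_synSet hp)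
    (le_csSup (bddAbove_synSet hp A) hMI)

end Synergy

/-- monotonicity of the backbone synergies
`0 = B^n ≤ B^{n-1} ≤ ⋯ ≤ B^1 ≤ B^0 = I(X;Y)`,
where `B^m(X → Y) = S^{γ_m}(X → Y)` with `γ_m` the subsets of size `m`. -/
theorem backbone_monotone
    {n : ℕ} {𝓧 : Fin n → Type*} [∀ i, Fintype (𝓧 i)] {Y : Type*} [Fintype Y]
    (p : (∀ i, 𝓧 i) → Y → ℝ) (hp : IsJoint p) :
    Syn p (Finset.univ.filter fun α : Finset (Fin n) => α.card = n) = 0 ∧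
    Syn p (Finset.univ.filter fun α : Finset (Fin n) => α.card = 0) = MI p ∧
    (∀ m, m < n →
      Syn p (Finset.univ.filter fun α : Finset (Fin n) => α.card = m + 1) ≤
        Syn p (Finset.univ.filter fun α : Finset (Fin n) => α.card = m)) :=
  ⟨Syn_eq_zero_of_univ_mem hp (by simp),
    Syn_eq_MI_of_forall_eq_empty hp (by simp),
    fun _ hm => Syn_le_Syn_of_constraintLE hp (backbone_constraintLE_succ hm)⟩
end
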